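/- Let k₁, C_d, u_m > 0 and define the saturation σ(u) = u if ‖u‖ ≤ u_m and σ(u) = u_m·u/‖u‖ otherwise. Then for every pair of differentiable functions r̄, v : ℝ≥0 → ℝ² satisfying ṙ̄(t) = v(t) and v̇(t) = σ(−k₁ r̄(t)) − C_d v(t) for all t ≥ 0, one has r̄(t) → 0 and v(t) → 0 as t → ∞; i.e., the center of the formation asymptotically converges to the safe-area center with zero velocity. -/

import Mathlib

/-!
Along a trajectory the energy `Ψ(‖r̄‖²) + ‖v‖²/2` decreases at rate `C_d ‖v‖²`, where `Ψ` is the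
potential with `2 Ψ'(‖x‖²) x = σ(k₁ x)` (quadratic up to the saturation radius `u_m / k₁`,
then growing like `u_m ‖x‖`). Hence the energy converges and bounds `v`, so `r̄` and `v`
are uniformly continuous on `[0, ∞)`. Barbalat's lemma applied to the energy gives `v → 0`;
applied to `v` it gives `v̇ → 0`, hence `σ(-k₁ r̄) → 0`, and since `σ` is the identity near `0`,
`r̄ → 0`.
-/

open Filter Set Topology
open scoped RealInnerProductSpace

section RealCalculus

variable {F : Type*} [NormedAddCommGroup F] [NormedSpace ℝ F]

theorem norm_sub_sub_smul_le_of_hasDerivAt {f g : ℝ → F} {a b C : ℝ} (hab : a ≤ b)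
    (hfg : ∀ t ∈ Icc a b, HasDerivAt f (g t) t) (hC : ∀ t ∈ Icc a b, ‖g t - g a‖ ≤ C) :
    ‖f b - f a - (b - a) • g a‖ ≤ C * (b - a) := by
  have hderiv : ∀ t ∈ Icc a b,
      HasDerivWithinAt (fun s => f s - s • g a) (g t - g a) (Icc a b) t := fun t ht =>
    (((hfg t ht).sub ((hasDerivAt_id' t).smul_const (g a))).congr_deriv
      (by rw [one_smul])).hasDerivWithinAt
  have := norm_image_sub_le_of_norm_deriv_le_segment' hderiv
    (fun t ht => hC t (Ico_subset_Icc_self ht)) b (right_mem_Icc.2 hab)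
  convert this using 2
  rw [sub_smul]
  abel

/-- Barbalat's lemma. -/
theorem tendsto_zero_of_hasDerivAt_of_uniformContinuousOn {f g : ℝ → F} {a : ℝ} {L : F}
    (hfg : ∀ t ≥ a, HasDerivAt f (g t) t) (hg : UniformContinuousOn g (Ici a))
    (hf : Tendsto f atTop (𝓝 L)) : Tendsto g atTop (𝓝 0) := by
  rw [NormedAddGroup.tendsto_nhds_zero]
  intro ε hε
  obtain ⟨δ, hδ, hclose⟩ := Metric.uniformContinuousOn_iff_le.1 hg (ε / 2) (half_pos hε)
  have hincr : Tendsto (fun t => f (t + δ) - f t) atTop (𝓝 0) := by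
    simpa using (hf.comp (tendsto_atTop_add_const_right _ δ tendsto_id)).sub hf
  filter_upwards [NormedAddGroup.tendsto_nhds_zero.1 hincr (δ * ε / 2) (by positivity),
    eventually_ge_atTop a] with t hsmall ht
  have hrem : ‖f (t + δ) - f t - δ • g t‖ ≤ ε / 2 * δ := by
    have := norm_sub_sub_smul_le_of_hasDerivAt (b := t + δ) (by linarith)
      (fun s hs => hfg s (ht.trans hs.1)) (fun s hs => by
        rw [← dist_eq_norm]
        exact hclose s (ht.trans hs.1) t ht (by
          rw [Real.dist_eq, abs_of_nonneg (by linarith [hs.1])]; linarith [hs.2]))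
    simpa only [add_sub_cancel_left] using this
  have : δ * ‖g t‖ < δ * ε := by
    calc δ * ‖g t‖ = ‖δ • g t‖ := by rw [norm_smul, Real.norm_of_nonneg hδ.le]
      _ ≤ ‖f (t + δ) - f t‖ + ‖f (t + δ) - f t - δ • g t‖ := by
        simpa using norm_sub_le (f (t + δ) - f t) (f (t + δ) - f t - δ • g t)
      _ < δ * ε := by linarith
  exact lt_of_mul_lt_mul_left this hδ.le

theorem uniformContinuousOn_of_hasDerivAt_of_norm_le {f f' : ℝ → F} {s : Set ℝ} {C : ℝ}
    (hs : Convex ℝ s) (hf : ∀ t ∈ s, HasDerivAt f (f' t) t) (hC : ∀ t ∈ s, ‖f' t‖ ≤ C) :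
    UniformContinuousOn f s :=
  (hs.lipschitzOnWith_of_nnnorm_hasDerivWithin_le (C := C.toNNReal)
    (fun t ht => (hf t ht).hasDerivWithinAt)
    (fun t ht => by rw [← NNReal.coe_le_coe]; exact (hC t ht).trans (Real.le_coe_toNNReal C))
    ).uniformContinuousOn


theorem hasDerivAt_ite_le {f g f' g' : ℝ → F} {c x : ℝ}
    (hf : ∀ y ≤ c, HasDerivAt f (f' y) y) (hg : ∀ y ≥ c, HasDerivAt g (g' y) y)
    (hc : f c = g c) (hc' : f' c = g' c) :
    HasDerivAt (fun y => if y ≤ c then f y else g y) (if x ≤ c then f' x else g' x) x := by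
  rcases lt_trichotomy x c with hx | rfl | hx
  · rw [if_pos hx.le]
    refine (hf x hx.le).congr_of_eventuallyEq ?_
    filter_upwards [eventually_lt_nhds hx] with y hy
    rw [if_pos hy.le]
  · rw [if_pos le_rfl]
    have hleft : HasDerivWithinAt (fun y => if y ≤ x then f y else g y) (f' x) (Iic x) x :=
      (hf x le_rfl).hasDerivWithinAt.congr (fun y hy => if_pos hy) (if_pos le_rfl)
    have hright : HasDerivWithinAt (fun y => if y ≤ x then f y else g y) (f' x) (Ici x) x := by
      refine hc' ▸ (hg x le_rfl).hasDerivWithinAt.congr (fun y hy => ?_)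
        (by rw [if_pos le_rfl, hc])
      rcases (mem_Ici.1 hy).eq_or_lt with rfl | hxy
      · rw [if_pos le_rfl, hc]
      · rw [if_neg (not_le.2 hxy)]
    simpa [Iic_union_Ici] using hleft.union hright
  · rw [if_neg (not_le.2 hx)]
    refine (hg x hx.le).congr_of_eventuallyEq ?_
    filter_upwards [eventually_gt_nhds hx] with y hy
    rw [if_neg (not_le.2 hy)]

end RealCalculus

theorem AntitoneOn.exists_tendsto_atTop {f : ℝ → ℝ} {a b : ℝ} (hf : AntitoneOn f (Ici a))
    (hb : ∀ t ≥ a, b ≤ f t) : ∃ L, Tendsto f atTop (𝓝 L) := by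
  have hanti : Antitone fun t => f (max t a) := fun s t hst =>
    hf (le_max_right s a) (le_max_right t a) (max_le_max hst le_rfl)
  refine ⟨_, (tendsto_atTop_ciInf hanti ⟨b, ?_⟩).congr' ?_⟩
  · rintro _ ⟨t, rfl⟩
    exact hb _ (le_max_right t a)
  · filter_upwards [eventually_ge_atTop a] with t ht
    rw [max_eq_left ht]

section Saturation

variable {E : Type*} [NormedAddCommGroup E] [NormedSpace ℝ E] {m : ℝ}

noncomputable def saturate (m : ℝ) (u : E) : E :=
  if ‖u‖ ≤ m then u else (m / ‖u‖) • u

theorem saturate_neg (u : E) : saturate m (-u) = -saturate m u := by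
  unfold saturate
  split_ifs <;> simp_all [smul_neg]

theorem saturate_eq_min_smul (hm : 0 ≤ m) (u : E) : saturate m u = min 1 (m / ‖u‖) • u := by
  unfold saturate
  split_ifs with hu
  · rcases (norm_nonneg u).eq_or_lt with h | h
    · simp [norm_eq_zero.1 h.symm]
    · rw [min_eq_left ((one_le_div h).2 hu), one_smul]
  · rw [min_eq_right ((div_le_one (hm.trans_lt (not_le.1 hu))).2 (not_le.1 hu).le)]

theorem norm_saturate (hm : 0 ≤ m) (u : E) : ‖saturate m u‖ = min ‖u‖ m := by
  rw [saturate_eq_min_smul hm, norm_smul, Real.norm_of_nonneg (by positivity),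
    min_mul_of_nonneg _ _ (norm_nonneg u), one_mul]
  rcases (norm_nonneg u).eq_or_lt with h | h
  · simp [← h, hm]
  · rw [div_mul_cancel₀ _ h.ne']

theorem saturate_eq_self_of_norm_lt (hm : 0 ≤ m) {u : E} (hu : ‖saturate m u‖ < m) :
    saturate m u = u := by
  rw [norm_saturate hm] at hu
  exact if_pos ((min_lt_iff.1 hu).resolve_right (lt_irrefl m)).le

theorem lipschitzWith_saturate (hm : 0 ≤ m) : LipschitzWith 2 (saturate (E := E) m) := by
  suffices key : ∀ u w : E, ‖w‖ ≤ ‖u‖ → ‖saturate m u - saturate m w‖ ≤ 2 * ‖u - w‖ by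
    refine LipschitzWith.of_dist_le_mul fun u w => ?_
    simp only [dist_eq_norm, NNReal.coe_ofNat]
    rcases le_total ‖w‖ ‖u‖ with h | h
    · exact key u w h
    · rw [norm_sub_rev, norm_sub_rev u]; exact key w u h
  intro u w hwu
  have hscale : ∀ x : E, min 1 (m / ‖x‖) * ‖x‖ = min ‖x‖ m ∧ 0 ≤ min 1 (m / ‖x‖) := fun x => by
    refine ⟨?_, le_min zero_le_one (by positivity)⟩
    rw [← norm_saturate hm, saturate_eq_min_smul hm, norm_smul, Real.norm_of_nonneg
      (le_min zero_le_one (by positivity))]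
  obtain ⟨hau, ha0⟩ := hscale u
  obtain ⟨hbw, -⟩ := hscale w
  set a := min 1 (m / ‖u‖)
  set b := min 1 (m / ‖w‖)
  have ha1 : a ≤ 1 := min_le_left _ _
  have hdecomp : saturate m u - saturate m w = a • (u - w) - (b - a) • w := by
    rw [saturate_eq_min_smul hm, saturate_eq_min_smul hm, smul_sub, sub_smul]
    abel
  have hfirst : ‖a • (u - w)‖ ≤ ‖u - w‖ := by
    rw [norm_smul, Real.norm_of_nonneg ha0]
    exact mul_le_of_le_one_left (norm_nonneg _) ha1
  -- `(b - a) ‖w‖ = min ‖w‖ m - a ‖w‖` lies between `0` and `a (‖u‖ - ‖w‖)`.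
  have hsecond : ‖(b - a) • w‖ ≤ ‖u - w‖ := by
    have h₁ : a * ‖w‖ ≤ a * ‖u‖ := mul_le_mul_of_nonneg_left hwu ha0
    have h₂ : a * ‖w‖ ≤ ‖w‖ := mul_le_of_le_one_left (norm_nonneg _) ha1
    have h₃ : a * (‖u‖ - ‖w‖) ≤ ‖u‖ - ‖w‖ := mul_le_of_le_one_left (by linarith) ha1
    have h₄ := norm_sub_norm_le u w
    have h₅ : min ‖w‖ m ≤ min ‖u‖ m := min_le_min_right m hwu
    have h₆ : a * ‖w‖ ≤ min ‖w‖ m := le_min h₂ (by linarith [min_le_right ‖u‖ m])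
    rw [norm_smul, Real.norm_eq_abs, ← abs_norm w, ← abs_mul, sub_mul, hbw, abs_le]
    constructor <;> linarith
  calc ‖saturate m u - saturate m w‖ ≤ ‖a • (u - w)‖ + ‖(b - a) • w‖ := hdecomp ▸ norm_sub_le _ _
    _ ≤ 2 * ‖u - w‖ := by linarith

theorem tendsto_of_tendsto_saturate {α : Type*} {l : Filter α} {u : α → E} (hm : 0 < m)
    (h : Tendsto (fun t => saturate m (u t)) l (𝓝 0)) : Tendsto u l (𝓝 0) := by
  have hnorm : Tendsto (fun t => ‖saturate m (u t)‖) l (𝓝 0) := by simpa using h.norm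
  refine h.congr' ?_
  filter_upwards [hnorm.eventually_lt_const hm] with t ht
  exact saturate_eq_self_of_norm_lt hm.le ht

end Saturation

section Potential

variable {k m : ℝ}

noncomputable def satPotential (k m x : ℝ) : ℝ :=
  if x ≤ (m / k) ^ 2 then k * x / 2 else m * √x - m ^ 2 / (2 * k)

noncomputable def satPotentialDeriv (k m x : ℝ) : ℝ :=
  if x ≤ (m / k) ^ 2 then k / 2 else m / (2 * √x)

theorem hasDerivAt_satPotential (hk : 0 < k) (hm : 0 < m) (x : ℝ) :
    HasDerivAt (satPotential k m) (satPotentialDeriv k m x) x := by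
  have hsqrt : √((m / k) ^ 2) = m / k := Real.sqrt_sq (by positivity)
  refine hasDerivAt_ite_le (f := fun y => k * y / 2) (g := fun y => m * √y - m ^ 2 / (2 * k))
    (f' := fun _ => k / 2) (g' := fun y => m / (2 * √y)) (fun y _ => ?_) (fun y hy => ?_) ?_ ?_
  · simpa using ((hasDerivAt_id' y).const_mul k).div_const 2
  · have hy0 : y ≠ 0 := (lt_of_lt_of_le (by positivity) hy).ne'
    simpa [div_eq_mul_inv, mul_comm, mul_left_comm] using
      ((Real.hasDerivAt_sqrt hy0).const_mul m).sub_const (m ^ 2 / (2 * k))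
  · rw [hsqrt]; field_simp; ring
  · rw [hsqrt]; field_simp

theorem satPotential_nonneg (hk : 0 < k) (hm : 0 ≤ m) {x : ℝ} (hx : 0 ≤ x) :
    0 ≤ satPotential k m x := by
  unfold satPotential
  split_ifs with h
  · positivity
  · have : m / k ≤ √x := Real.le_sqrt_of_sq_le (not_le.1 h).le
    have : m ^ 2 / k ≤ m * √x := by
      calc m ^ 2 / k = m * (m / k) := by ring
        _ ≤ m * √x := by gcongr
    have : m ^ 2 / (2 * k) ≤ m ^ 2 / k := by gcongr; linarith
    linarith

theorem satPotentialDeriv_smul {E : Type*} [NormedAddCommGroup E] [NormedSpace ℝ E]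
    (hk : 0 < k) (hm : 0 ≤ m) (x : E) :
    (2 * satPotentialDeriv k m (‖x‖ ^ 2)) • x = saturate m (k • x) := by
  have hcase : ‖x‖ ^ 2 ≤ (m / k) ^ 2 ↔ ‖k • x‖ ≤ m := by
    rw [norm_smul, Real.norm_of_nonneg hk.le, ← le_div_iff₀' hk,
      pow_le_pow_iff_left₀ (norm_nonneg x) (by positivity) two_ne_zero]
  unfold satPotentialDeriv saturate
  split_ifs with h₁ h₂ h₂
  · rw [mul_div_cancel₀ _ two_ne_zero]
  · exact absurd (hcase.1 h₁) h₂
  · exact absurd (hcase.2 h₂) h₁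
  · have hx : ‖x‖ ≠ 0 := fun h => h₁ (by rw [h, zero_pow two_ne_zero]; positivity)
    rw [Real.sqrt_sq (norm_nonneg x), smul_smul, norm_smul, Real.norm_of_nonneg hk.le]
    congr 1
    field_simp

noncomputable def satEnergy {E : Type*} [NormedAddCommGroup E] (k m : ℝ) (x w : E) : ℝ :=
  satPotential k m (‖x‖ ^ 2) + ‖w‖ ^ 2 / 2

theorem satEnergy_nonneg {E : Type*} [NormedAddCommGroup E] (hk : 0 < k) (hm : 0 ≤ m)
    (x w : E) : 0 ≤ satEnergy k m x w :=
  add_nonneg (satPotential_nonneg hk hm (sq_nonneg _)) (by positivity)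

end Potential

section Trajectory

variable {E : Type*} [NormedAddCommGroup E] [InnerProductSpace ℝ E] {k c m : ℝ} {r v : ℝ → E}

theorem hasDerivAt_satEnergy (hk : 0 < k) (hm : 0 < m) {t : ℝ} (hr : HasDerivAt r (v t) t)
    (hv : HasDerivAt v (saturate m (-(k • r t)) - c • v t) t) :
    HasDerivAt (fun t => satEnergy k m (r t) (v t)) (-(c * ‖v t‖ ^ 2)) t := by
  have hpot := (hasDerivAt_satPotential hk hm _).comp t hr.norm_sq
  refine (hpot.add (hv.norm_sq.div_const 2)).congr_deriv ?_
  have hgrad : satPotentialDeriv k m (‖r t‖ ^ 2) * (2 * ⟪r t, v t⟫) =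
      ⟪saturate m (k • r t), v t⟫ := by
    rw [← satPotentialDeriv_smul hk hm.le, real_inner_smul_left]
    ring
  rw [hgrad, saturate_neg, inner_sub_right, inner_neg_right, real_inner_smul_right,
    real_inner_self_eq_norm_sq, real_inner_comm]
  ring

variable (hk : 0 < k) (hm : 0 < m) (hr : ∀ t ≥ 0, HasDerivAt r (v t) t)
  (hv : ∀ t ≥ 0, HasDerivAt v (saturate m (-(k • r t)) - c • v t) t)
include hk hm hr hv

theorem antitoneOn_satEnergy (hc : 0 ≤ c) :
    AntitoneOn (fun t => satEnergy k m (r t) (v t)) (Ici 0) := by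
  have hE : ∀ t ≥ 0, HasDerivAt (fun t => satEnergy k m (r t) (v t)) (-(c * ‖v t‖ ^ 2)) t :=
    fun t ht => hasDerivAt_satEnergy hk hm (hr t ht) (hv t ht)
  refine antitoneOn_of_hasDerivWithinAt_nonpos (f' := fun t => -(c * ‖v t‖ ^ 2)) (convex_Ici 0)
    (fun t ht => (hE t ht).continuousAt.continuousWithinAt) (fun t ht => ?_)
    (fun t _ => neg_nonpos.2 (by positivity))
  rw [interior_Ici] at ht
  exact (hE t (le_of_lt ht)).hasDerivWithinAt

theorem norm_le_sqrt_satEnergy (hc : 0 ≤ c) :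
    ∀ t ≥ 0, ‖v t‖ ≤ √(2 * satEnergy k m (r 0) (v 0)) := by
  intro t ht
  have hdecr := antitoneOn_satEnergy hk hm hr hv hc self_mem_Ici ht ht
  have hpot := satPotential_nonneg hk hm.le (sq_nonneg ‖r t‖)
  simp only [satEnergy] at hdecr ⊢
  exact Real.le_sqrt_of_sq_le (by linarith)

theorem uniformContinuousOn_velocity (hc : 0 ≤ c) : UniformContinuousOn v (Ici 0) := by
  refine uniformContinuousOn_of_hasDerivAt_of_norm_le (convex_Ici 0) hv
    (C := m + c * √(2 * satEnergy k m (r 0) (v 0))) fun t ht => ?_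
  calc ‖saturate m (-(k • r t)) - c • v t‖ ≤ ‖saturate m (-(k • r t))‖ + c * ‖v t‖ := by
        simpa [norm_smul, abs_of_nonneg hc] using norm_sub_le (saturate m (-(k • r t))) (c • v t)
    _ ≤ m + c * √(2 * satEnergy k m (r 0) (v 0)) := by
        gcongr
        · exact (norm_saturate hm.le _).trans_le (min_le_right _ _)
        · exact norm_le_sqrt_satEnergy hk hm hr hv hc t ht

theorem tendsto_velocity_zero [ProperSpace E] (hc : 0 < c) : Tendsto v atTop (𝓝 0) := by
  set V := √(2 * satEnergy k m (r 0) (v 0))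
  obtain ⟨L, hL⟩ := (antitoneOn_satEnergy hk hm hr hv hc.le).exists_tendsto_atTop
    fun t _ => satEnergy_nonneg hk hm.le (r t) (v t)
  -- `v` stays in the compact ball of radius `V`, on which `w ↦ ‖w‖²` is uniformly continuous.
  have hdissip : UniformContinuousOn (fun t => -(c * ‖v t‖ ^ 2)) (Ici 0) :=
    ((isCompact_closedBall (0 : E) V).uniformContinuousOn_of_continuous
      (by fun_prop : Continuous fun w : E => -(c * ‖w‖ ^ 2)).continuousOn).comp
      (uniformContinuousOn_velocity hk hm hr hv hc.le)
      fun t ht => mem_closedBall_zero_iff.2 (norm_le_sqrt_satEnergy hk hm hr hv hc.le t ht)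
  have hsq : Tendsto (fun t => ‖v t‖ ^ 2) atTop (𝓝 0) := by
    simpa [hc.ne'] using (tendsto_zero_of_hasDerivAt_of_uniformContinuousOn
      (fun t ht => hasDerivAt_satEnergy hk hm (hr t ht) (hv t ht)) hdissip hL).const_mul (-c⁻¹)
  rw [tendsto_zero_iff_norm_tendsto_zero]
  simpa [Function.comp_def, Real.sqrt_sq_eq_abs] using (Real.continuous_sqrt.tendsto 0).comp hsq

theorem tendsto_position_zero (hc : 0 ≤ c) (hv₀ : Tendsto v atTop (𝓝 0)) :
    Tendsto r atTop (𝓝 0) := by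
  have hru : UniformContinuousOn r (Ici 0) :=
    uniformContinuousOn_of_hasDerivAt_of_norm_le (convex_Ici 0) hr
      (norm_le_sqrt_satEnergy hk hm hr hv hc)
  have hvu := uniformContinuousOn_velocity hk hm hr hv hc
  have hacc : UniformContinuousOn (fun t => saturate m (-(k • r t)) - c • v t) (Ici 0) := by
    rw [uniformContinuousOn_iff_restrict] at hru hvu ⊢
    exact ((lipschitzWith_saturate hm.le).uniformContinuous.comp (hru.const_smul k).neg).sub
      (hvu.const_smul c)
  have hsat : Tendsto (fun t => saturate m (-(k • r t))) atTop (𝓝 0) := by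
    simpa using (tendsto_zero_of_hasDerivAt_of_uniformContinuousOn hv hacc hv₀).add
      (hv₀.const_smul c)
  simpa [hk.ne'] using ((tendsto_of_tendsto_saturate hm hsat).neg).const_smul k⁻¹

end Trajectory

/-- Every trajectory of ṙ̄ = v, v̇ = σ(−k₁ r̄) − C_d v with the saturated
control converges to the origin with zero velocity: r̄(t) → 0 and v(t) → 0 as t → ∞. -/
theorem stmt_15 (k₁ Cd um : ℝ) (hk₁ : 0 < k₁) (hCd : 0 < Cd) (hum : 0 < um)
    (sat : EuclideanSpace ℝ (Fin 2) → EuclideanSpace ℝ (Fin 2))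
    (hsat : ∀ u, sat u = if ‖u‖ ≤ um then u else (um / ‖u‖) • u)
    (rb v : ℝ → EuclideanSpace ℝ (Fin 2))
    (hrb : Differentiable ℝ rb) (hv : Differentiable ℝ v)
    (hdr : ∀ t, 0 ≤ t → deriv rb t = v t)
    (hdv : ∀ t, 0 ≤ t → deriv v t = sat (-(k₁ • rb t)) - Cd • v t) :
    Filter.Tendsto rb Filter.atTop (nhds 0) ∧
    Filter.Tendsto v Filter.atTop (nhds 0) := by
  obtain rfl : sat = saturate um := funext hsat
  have hrb' : ∀ t ≥ 0, HasDerivAt rb (v t) t := fun t ht => hdr t ht ▸ (hrb t).hasDerivAt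
  have hv' : ∀ t ≥ 0, HasDerivAt v (saturate um (-(k₁ • rb t)) - Cd • v t) t :=
    fun t ht => hdv t ht ▸ (hv t).hasDerivAt
  have hvlim := tendsto_velocity_zero hk₁ hum hrb' hv' hCd
  exact ⟨tendsto_position_zero hk₁ hum hrb' hv' hCd.le hvlim, hvlim⟩
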